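/- Let A and B be groups and W ⊆ F_∞ a set of words. Regard A and B as subgroups of the verbal product A ∗_W B. If a ∈ W(A), then a commutes with every element of B in A ∗_W B, and a commutes with every element of [A,B]^w in A ∗_W B. -/

import Mathlib

open Monoid
open scoped commutatorElement

/-- The verbal subgroup `W(G)`: the subgroup of `G` generated by all evaluations of the
words of `W` at tuples of elements of `G`. -/
def verbalSubgroup (W : Set (FreeGroup ℕ)) (G : Type*) [Group G] : Subgroup G :=
  Subgroup.closure {x | ∃ w ∈ W, ∃ f : ℕ → G, FreeGroup.lift f w = x}

theorem lift_comp_eval {G H : Type*} [Group G] [Group H] (φ : G →* H) (f : ℕ → G)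
    (w : FreeGroup ℕ) : φ (FreeGroup.lift f w) = FreeGroup.lift (φ ∘ f) w := by
  have h : φ.comp (FreeGroup.lift f) = FreeGroup.lift (φ ∘ f) :=
    FreeGroup.ext_hom _ _ (fun a => by simp)
  exact DFunLike.congr_fun h w

theorem verbalSubgroup_map_le {G H : Type*} [Group G] [Group H] (W : Set (FreeGroup ℕ))
    (φ : G →* H) : (verbalSubgroup W G).map φ ≤ verbalSubgroup W H := by
  rw [verbalSubgroup, MonoidHom.map_closure, Subgroup.closure_le]
  rintro x ⟨y, ⟨w, hw, f, rfl⟩, rfl⟩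
  exact Subgroup.subset_closure ⟨w, hw, φ ∘ f, (lift_comp_eval φ f w).symm⟩

/-- Verbal subgroups are normal. -/
instance verbalSubgroup_normal (W : Set (FreeGroup ℕ)) (G : Type*) [Group G] :
    (verbalSubgroup W G).Normal := by
  constructor
  intro n hn g
  have h := verbalSubgroup_map_le (G := G) (H := G) W (MulAut.conj g).toMonoidHom
  have h2 : (MulAut.conj g).toMonoidHom n ∈ verbalSubgroup W G := h ⟨n, hn, rfl⟩
  simpa using h2

/-- The subgroup `[A,B]` of the free product `A ∗ B` generated by the commutators
`[a,b] = a * b * a⁻¹ * b⁻¹` with `a ∈ A`, `b ∈ B`. -/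
def commSubgroup (A B : Type*) [Group A] [Group B] : Subgroup (Coprod A B) :=
  Subgroup.closure {x | ∃ (a : A) (b : B), x = ⁅(Coprod.inl a : Coprod A B), Coprod.inr b⁆}

/-- The kernel of the verbal product: (the normal closure of) `W(A ∗ B) ∩ [A,B]`.
Since `W(A ∗ B) ∩ [A,B]` is in fact a normal subgroup of `A ∗ B`, taking the normal
closure does not change the subgroup. -/
def verbalProductKer (W : Set (FreeGroup ℕ)) (A B : Type*) [Group A] [Group B] :
    Subgroup (Coprod A B) :=
  Subgroup.normalClosure ((verbalSubgroup W (Coprod A B) ⊓ commSubgroup A B : Subgroup _) : Set _)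

instance verbalProductKer_normal (W : Set (FreeGroup ℕ)) (A B : Type*) [Group A] [Group B] :
    (verbalProductKer W A B).Normal := Subgroup.normalClosure_normal

/-- The verbal product `A ∗_W B := (A ∗ B)/(W(A ∗ B) ∩ [A,B])`. -/
abbrev VerbalProduct (W : Set (FreeGroup ℕ)) (A B : Type*) [Group A] [Group B] : Type _ :=
  Coprod A B ⧸ verbalProductKer W A B

/-- The quotient homomorphism `q : A ∗ B → A ∗_W B`. -/
def vq (W : Set (FreeGroup ℕ)) (A B : Type*) [Group A] [Group B] :
    Coprod A B →* VerbalProduct W A B :=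
  QuotientGroup.mk' (verbalProductKer W A B)

/-- The copy of `A` inside the verbal product `A ∗_W B`. -/
def vinl (W : Set (FreeGroup ℕ)) (A B : Type*) [Group A] [Group B] :
    A →* VerbalProduct W A B := (vq W A B).comp Coprod.inl

/-- The copy of `B` inside the verbal product `A ∗_W B`. -/
def vinr (W : Set (FreeGroup ℕ)) (A B : Type*) [Group A] [Group B] :
    B →* VerbalProduct W A B := (vq W A B).comp Coprod.inr

/-- `[A,B]^w`, the image of `[A,B]` in the verbal product `A ∗_W B`. -/
def commW (W : Set (FreeGroup ℕ)) (A B : Type*) [Group A] [Group B] :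
    Subgroup (VerbalProduct W A B) := (commSubgroup A B).map (vq W A B)

/-! Since `inl a` lies in the normal subgroup `W(A ∗ B)`, so does `⁅inl a, g⁆` for every `g`;
whenever this commutator also lies in `[A,B]` it is killed in `A ∗_W B`. This is the case
for `g = inr b`, a generator of `[A,B]`, and for `g ∈ [A,B]`, as `[A,B]` is normal. -/

namespace Monoid.Coprod

variable {A B : Type*} [Group A] [Group B]

theorem inl_mul_commutatorElement_mul_inv (a' a : A) (b : B) :
    inl a' * ⁅(inl a : Coprod A B), inr b⁆ * (inl a')⁻¹ =
      ⁅(inl (a' * a) : Coprod A B), inr b⁆ * ⁅(inl a' : Coprod A B), inr b⁆⁻¹ := by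
  simp only [map_mul]
  group

theorem inr_mul_commutatorElement_mul_inv (b' : B) (a : A) (b : B) :
    (inr b' : Coprod A B) * ⁅(inl a : Coprod A B), inr b⁆ * (inr b')⁻¹ =
      ⁅(inl a : Coprod A B), inr b'⁆⁻¹ * ⁅(inl a : Coprod A B), inr (b' * b)⁆ := by
  simp only [map_mul]
  group

end Monoid.Coprod

open Monoid.Coprod in
instance commSubgroup_normal (A B : Type*) [Group A] [Group B] :
    (commSubgroup A B).Normal := by
  rw [← Subgroup.normalizer_eq_top_iff, eq_top_iff, ← range_inl_sup_range_inr, sup_le_iff,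
    commSubgroup, Subgroup.le_normalizer_closure_iff, Subgroup.le_normalizer_closure_iff]
  constructor
  · rintro _ ⟨a', rfl⟩ _ ⟨a, b, rfl⟩
    rw [inl_mul_commutatorElement_mul_inv]
    exact mul_mem (Subgroup.subset_closure ⟨_, _, rfl⟩)
      (inv_mem (Subgroup.subset_closure ⟨_, _, rfl⟩))
  · rintro _ ⟨b', rfl⟩ _ ⟨a, b, rfl⟩
    rw [inr_mul_commutatorElement_mul_inv]
    exact mul_mem (inv_mem (Subgroup.subset_closure ⟨_, _, rfl⟩))
      (Subgroup.subset_closure ⟨_, _, rfl⟩)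

theorem commute_vq_of_commutatorElement_mem {A B : Type*} [Group A] [Group B]
    {W : Set (FreeGroup ℕ)} {x g : Coprod A B} (hx : x ∈ verbalSubgroup W (Coprod A B))
    (hxg : ⁅x, g⁆ ∈ commSubgroup A B) : Commute (vq W A B x) (vq W A B g) := by
  have hxgW : ⁅x, g⁆ ∈ verbalSubgroup W (Coprod A B) :=
    Subgroup.commutator_le_left _ ⊤ <|
      Subgroup.commutator_mem_commutator hx (Subgroup.mem_top g)
  rw [← commutatorElement_eq_one_iff_commute, ← map_commutatorElement, vq,
    QuotientGroup.mk'_apply, QuotientGroup.eq_one_iff]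
  exact Subgroup.subset_normalClosure ⟨hxgW, hxg⟩

/-- If `a ∈ W(A)`, then (the image of) `a` commutes with every element of `B` and with
every element of `[A,B]^w` in the verbal product `A ∗_W B`. -/
theorem verbal_element_commutes {A B : Type*} [Group A] [Group B]
    (W : Set (FreeGroup ℕ)) (a : A) (ha : a ∈ verbalSubgroup W A) :
    (∀ b : B, Commute (vinl W A B a) (vinr W A B b)) ∧
    (∀ u ∈ commW W A B, Commute (vinl W A B a) u) := by
  have hinl : Coprod.inl a ∈ verbalSubgroup W (Coprod A B) :=
    verbalSubgroup_map_le W Coprod.inl ⟨a, ha, rfl⟩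
  constructor
  · intro b
    exact commute_vq_of_commutatorElement_mem hinl (Subgroup.subset_closure ⟨a, b, rfl⟩)
  · rintro _ ⟨g, hg, rfl⟩
    exact commute_vq_of_commutatorElement_mem hinl <| Subgroup.commutator_le_right ⊤ _ <|
      Subgroup.commutator_mem_commutator (Subgroup.mem_top _) hg
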